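/- There exists a lattice L* with countable underlying set such that L* is locally finite, universal for finite lattices, and ultrahomogeneous for finite lattices. -/

import Mathlib

/-- A lattice is locally finite if every finite subset is contained in a finite
sublattice (a finite subset closed under `⊔` and `⊓`). -/
def LatLocallyFinite (L : Type) [Lattice L] : Prop :=
  ∀ S : Finset L, ∃ T : Finset L, S ⊆ T ∧ ∀ a ∈ T, ∀ b ∈ T, a ⊔ b ∈ T ∧ a ⊓ b ∈ T

/-- A lattice embedding: an injective map preserving `⊔` and `⊓`. -/
def IsLatEmb {A L : Type} [Lattice A] [Lattice L] (e : A → L) : Prop :=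
  Function.Injective e ∧ ∀ a b : A, e (a ⊔ b) = e a ⊔ e b ∧ e (a ⊓ b) = e a ⊓ e b

/-- A lattice `L` is universal for finite lattices if every finite lattice admits
a lattice embedding into `L`. -/
def UnivFin (L : Type) [Lattice L] : Prop :=
  ∀ (A : Type) [Fintype A] [Lattice A], ∃ e : A → L, IsLatEmb e

/-- A lattice `L` is ultrahomogeneous for finite lattices if for all finite lattices
`A`, `B`, every lattice embedding `j : A → B` and every lattice embedding `e : A → L`,
there is a lattice embedding `e' : B → L` with `e' ∘ j = e`. -/
def UltraFin (L : Type) [Lattice L] : Prop :=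
  ∀ (A B : Type) [Fintype A] [Lattice A] [Fintype B] [Lattice B]
    (j : A → B) (e : A → L), IsLatEmb j → IsLatEmb e →
    ∃ e' : B → L, IsLatEmb e' ∧ e' ∘ j = e

/-!
Finite lattices have the amalgamation property (Jónsson): for embeddings `j : A → B` and
`e : A → C`, the sets of elements of `B ⊕ C` that are downward closed for the preorder glued
along `A` and closed under the joins of `B` and of `C` form a lattice, into which `B` and `C`
embed by principal ideals, compatibly over `A`.

Realize finite lattices on finite sets of natural numbers. Then the extension problems
"extend an embedding `A → ℕ` along `A → B`", with `A`, `B` finite, form a countable family.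
Build a chain of finite lattices on `ℕ` in which every problem is scheduled infinitely often
and, whenever it makes sense at that stage, is solved by amalgamation. The union of the chain
is countable and locally finite, and every embedding of a finite `A` into it lands in a stage,
hence extends along any `A → B`. With `A` empty this is universality.
-/

open Function

section IsLatEmb

variable {A B C : Type} [Lattice A] [Lattice B] [Lattice C]

theorem isLatEmb_id : IsLatEmb (id : A → A) :=
  ⟨injective_id, fun _ _ => ⟨rfl, rfl⟩⟩

theorem isLatEmb_of_isEmpty [IsEmpty A] (f : A → B) : IsLatEmb f :=
  ⟨injective_of_subsingleton f, isEmptyElim⟩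

theorem IsLatEmb.comp {f : B → C} {g : A → B} (hf : IsLatEmb f) (hg : IsLatEmb g) :
    IsLatEmb (f ∘ g) :=
  ⟨hf.1.comp hg.1, fun a b => by
    simp only [comp_apply, (hg.2 a b).1, (hg.2 a b).2, hf.2, and_self]⟩

theorem IsLatEmb.of_comp {f : A → B} {g : B → C} (hg : IsLatEmb g) (hgf : IsLatEmb (g ∘ f)) :
    IsLatEmb f :=
  ⟨hgf.1.of_comp, fun a b =>
    ⟨hg.1 <| by rw [← comp_apply (f := g), (hgf.2 a b).1, (hg.2 _ _).1]; rfl,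
     hg.1 <| by rw [← comp_apply (f := g), (hgf.2 a b).2, (hg.2 _ _).2]; rfl⟩⟩

theorem IsLatEmb.le_iff {e : A → B} (he : IsLatEmb e) {a b : A} : e a ≤ e b ↔ a ≤ b := by
  rw [← sup_eq_right, ← (he.2 a b).1, he.1.eq_iff, sup_eq_right]

end IsLatEmb

theorem UltraFin.univFin {L : Type} [Lattice L] (h : UltraFin L) : UnivFin L := fun A _ _ =>
  let ⟨e, he, _⟩ := h (Fin 0) A Fin.elim0 Fin.elim0 (isLatEmb_of_isEmpty _) (isLatEmb_of_isEmpty _)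
  ⟨e, he⟩

section Transfer

variable {A B : Type} [Lattice B] (e : A ≃ B)

theorem Equiv.isLatEmb_lattice : @IsLatEmb A B e.lattice _ e :=
  let _ := e.lattice
  ⟨e.injective, fun _ _ => ⟨e.apply_symm_apply _, e.apply_symm_apply _⟩⟩

theorem Equiv.isLatEmb_symm_lattice : @IsLatEmb B A _ e.lattice e.symm :=
  let _ := e.lattice
  ⟨e.symm.injective, fun a b =>
    ⟨show e.symm (a ⊔ b) = e.symm (e (e.symm a) ⊔ e (e.symm b)) by simp,
     show e.symm (a ⊓ b) = e.symm (e (e.symm a) ⊓ e (e.symm b)) by simp⟩⟩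

end Transfer

namespace Amalgam

open Sum

variable {A B C : Type} [Lattice B] [Lattice C] (j : A → B) (e : A → C)

def Rel : B ⊕ C → B ⊕ C → Prop
  | inl b, inl b' => b ≤ b'
  | inr c, inr c' => c ≤ c'
  | inl b, inr c => ∃ a, b ≤ j a ∧ e a ≤ c
  | inr c, inl b => ∃ a, c ≤ e a ∧ j a ≤ b

structure IsIdeal (I : Set (B ⊕ C)) : Prop where
  lower : ∀ ⦃x y⦄, Rel j e x y → y ∈ I → x ∈ I
  inl_sup : ∀ ⦃b b'⦄, inl b ∈ I → inl b' ∈ I → inl (b ⊔ b') ∈ I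
  inr_sup : ∀ ⦃c c'⦄, inr c ∈ I → inr c' ∈ I → inr (c ⊔ c') ∈ I

def idealClosure : ClosureOperator (Set (B ⊕ C)) :=
  .ofCompletePred (IsIdeal j e) fun _ hs =>
    ⟨fun _ _ hxy hy I hI => (hs I hI).lower hxy (hy I hI),
     fun _ _ hb hb' I hI => (hs I hI).inl_sup (hb I hI) (hb' I hI),
     fun _ _ hc hc' I hI => (hs I hI).inr_sup (hc I hI) (hc' I hI)⟩

end Amalgam

/-- Jónsson's amalgam of `B` and `C` over `A`: the lattice of ideals of the partial lattice
`B ∪_A C`. -/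
abbrev Amalgam {A B C : Type} [Lattice B] [Lattice C] (j : A → B) (e : A → C) : Type :=
  (Amalgam.idealClosure j e).Closeds

namespace Amalgam

open Sum

variable {A B C : Type} [Lattice B] [Lattice C] (j : A → B) (e : A → C)

instance : Lattice (Amalgam j e) := (idealClosure j e).gi.liftCompleteLattice.toLattice

def principal (z : B ⊕ C) : Amalgam j e := (idealClosure j e).toCloseds {x | Rel j e x z}

variable {j e}

theorem rel_swap {x y : B ⊕ C} : Rel j e x y ↔ Rel e j x.swap y.swap := by
  cases x <;> cases y <;> rfl

theorem rel_refl (x : B ⊕ C) : Rel j e x x := by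
  cases x <;> exact le_rfl

theorem principal_le_iff {z : B ⊕ C} {I : Amalgam j e} : principal j e z ≤ I ↔ z ∈ I.1 :=
  ((idealClosure j e).gi.gc _ _).trans ⟨fun h => h (rel_refl z), fun h _ hx => I.2.lower hx h⟩

variable [Lattice A] (hj : IsLatEmb j) (he : IsLatEmb e)
include hj he

theorem rel_trans_inl {b : B} {y z : B ⊕ C} (h₁ : Rel j e (inl b) y) (h₂ : Rel j e y z) :
    Rel j e (inl b) z :=
  match y, z, h₁, h₂ with
  | inl _, inl _, h₁, h₂ => le_trans h₁ h₂
  | inl _, inr _, h₁, ⟨a, ha, ha'⟩ => ⟨a, h₁.trans ha, ha'⟩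
  | inr _, inr _, ⟨a, ha, ha'⟩, h₂ => ⟨a, ha, ha'.trans h₂⟩
  | inr _, inl _, ⟨_, ha, ha'⟩, ⟨_, hb, hb'⟩ =>
    ha.trans <| (hj.le_iff.2 (he.le_iff.1 (ha'.trans hb))).trans hb'

theorem rel_trans {x y z : B ⊕ C} (h₁ : Rel j e x y) (h₂ : Rel j e y z) : Rel j e x z := by
  cases x with
  | inl b => exact rel_trans_inl hj he h₁ h₂
  | inr c =>
    rw [rel_swap] at h₁ h₂ ⊢
    exact rel_trans_inl he hj h₁ h₂

theorem rel_inl_sup {b b' : B} {z : B ⊕ C} (h : Rel j e (inl b) z) (h' : Rel j e (inl b') z) :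
    Rel j e (inl (b ⊔ b')) z :=
  match z, h, h' with
  | inl _, h, h' => sup_le h h'
  | inr _, ⟨a, ha, ha'⟩, ⟨a', hb, hb'⟩ =>
    ⟨a ⊔ a', (hj.2 a a').1 ▸ sup_le_sup ha hb, (he.2 a a').1 ▸ sup_le ha' hb'⟩

theorem rel_inl_inf {b b' : B} {z : B ⊕ C} (h : Rel j e z (inl b)) (h' : Rel j e z (inl b')) :
    Rel j e z (inl (b ⊓ b')) :=
  match z, h, h' with
  | inl _, h, h' => le_inf h h'
  | inr _, ⟨a, ha, ha'⟩, ⟨a', hb, hb'⟩ =>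
    ⟨a ⊓ a', (he.2 a a').2 ▸ le_inf ha hb, (hj.2 a a').2 ▸ inf_le_inf ha' hb'⟩

theorem rel_inr_sup {c c' : C} {z : B ⊕ C} (h : Rel j e (inr c) z) (h' : Rel j e (inr c') z) :
    Rel j e (inr (c ⊔ c')) z := by
  rw [rel_swap] at h h' ⊢
  exact rel_inl_sup he hj h h'

theorem rel_inr_inf {c c' : C} {z : B ⊕ C} (h : Rel j e z (inr c)) (h' : Rel j e z (inr c')) :
    Rel j e z (inr (c ⊓ c')) := by
  rw [rel_swap] at h h' ⊢
  exact rel_inl_inf he hj h h'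

theorem coe_principal (z : B ⊕ C) : (principal j e z).1 = {x | Rel j e x z} :=
  ClosureOperator.IsClosed.closure_eq (c := idealClosure j e)
    { lower := fun _ _ hxy hy => rel_trans hj he hxy hy
      inl_sup := fun _ _ => rel_inl_sup hj he
      inr_sup := fun _ _ => rel_inr_sup hj he }

theorem principal_le_principal {y z : B ⊕ C} :
    principal j e y ≤ principal j e z ↔ Rel j e y z := by
  rw [principal_le_iff, coe_principal hj he]
  rfl

theorem isLatEmb_principal_comp {X : Type} [Lattice X] (s : X → B ⊕ C)
    (hle : ∀ x y, Rel j e (s x) (s y) ↔ x ≤ y)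
    (hsup : ∀ (I : Amalgam j e) x y, s x ∈ I.1 → s y ∈ I.1 → s (x ⊔ y) ∈ I.1)
    (hinf : ∀ z x y, Rel j e z (s x) → Rel j e z (s y) → Rel j e z (s (x ⊓ y))) :
    IsLatEmb (principal j e ∘ s) := by
  have hiff x y : principal j e (s x) ≤ principal j e (s y) ↔ x ≤ y :=
    (principal_le_principal hj he).trans (hle x y)
  refine ⟨fun x y h => le_antisymm ((hiff x y).1 h.le) ((hiff y x).1 h.ge),
    fun x y => ⟨le_antisymm ?_ ?_, le_antisymm ?_ ?_⟩⟩
  · exact principal_le_iff.2 <| hsup _ x y (principal_le_iff.1 le_sup_left)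
      (principal_le_iff.1 le_sup_right)
  · exact sup_le ((hiff _ _).2 le_sup_left) ((hiff _ _).2 le_sup_right)
  · exact le_inf ((hiff _ _).2 inf_le_left) ((hiff _ _).2 inf_le_right)
  · intro z hz
    have hx : z ∈ (principal j e (s x)).1 := inf_le_left (b := principal j e (s y)) hz
    have hy : z ∈ (principal j e (s y)).1 := inf_le_right (a := principal j e (s x)) hz
    show z ∈ (principal j e (s (x ⊓ y))).1
    rw [coe_principal hj he] at hx hy ⊢
    exact hinf z x y hx hy

theorem isLatEmb_principal_inl : IsLatEmb (principal j e ∘ (inl : B → B ⊕ C)) :=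
  isLatEmb_principal_comp hj he _ (fun _ _ => Iff.rfl) (fun I _ _ h h' => I.2.inl_sup h h')
    (fun _ _ _ => rel_inl_inf hj he)

theorem isLatEmb_principal_inr : IsLatEmb (principal j e ∘ (inr : C → B ⊕ C)) :=
  isLatEmb_principal_comp hj he _ (fun _ _ => Iff.rfl) (fun I _ _ h h' => I.2.inr_sup h h')
    (fun _ _ _ => rel_inr_inf hj he)

theorem principal_inl_comp_eq : principal j e ∘ inl ∘ j = principal j e ∘ inr ∘ e :=
  funext fun a => le_antisymm ((principal_le_principal hj he).2 ⟨a, le_rfl, le_rfl⟩)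
    ((principal_le_principal hj he).2 ⟨a, le_rfl, le_rfl⟩)

end Amalgam

theorem exists_finite_amalgam {A B C : Type} [Lattice A] [Lattice B] [Lattice C] [Finite B]
    [Finite C] {j : A → B} {e : A → C} (hj : IsLatEmb j) (he : IsLatEmb e) :
    ∃ (D : Type) (_ : Lattice D) (_ : Finite D) (u : B → D) (v : C → D),
      IsLatEmb u ∧ IsLatEmb v ∧ u ∘ j = v ∘ e :=
  ⟨Amalgam j e, inferInstance, inferInstance, _, _, Amalgam.isLatEmb_principal_inl hj he,
    Amalgam.isLatEmb_principal_inr hj he, Amalgam.principal_inl_comp_eq hj he⟩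

theorem exists_injective_comp_eq_val {S : Finset ℕ} {D : Type} [Finite D] {v : S → D}
    (hv : Injective v) : ∃ f : D → ℕ, Injective f ∧ f ∘ v = Subtype.val := by
  obtain ⟨c, hc⟩ := Countable.exists_injective_nat D
  have hS (p : S) : p.1 < S.sup id + 1 := Nat.lt_succ_of_le (Finset.le_sup (f := id) p.2)
  -- points outside the range of `v` are sent above `S`
  refine ⟨extend v Subtype.val (fun d => S.sup id + 1 + c d), fun d d' h => ?_,
    extend_comp hv _ _⟩
  rcases em (∃ p, v p = d) with ⟨p, rfl⟩ | hd <;> rcases em (∃ p, v p = d') with ⟨p', rfl⟩ | hd'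
  · rw [hv.extend_apply, hv.extend_apply] at h
    rw [Subtype.ext h]
  · rw [hv.extend_apply, extend_apply' _ _ _ hd'] at h
    exact absurd (hS p) (by omega)
  · rw [hv.extend_apply, extend_apply' _ _ _ hd] at h
    exact absurd (hS p') (by omega)
  · rw [extend_apply' _ _ _ hd, extend_apply' _ _ _ hd'] at h
    exact hc (by omega)

/-- `s` as a bare type, so that it does not inherit the linear order of `ℕ`. -/
def Elems (s : Finset ℕ) : Type := s

def Elems.val {s : Finset ℕ} (x : Elems s) : ℕ := Subtype.val x

theorem Elems.ext {s : Finset ℕ} {x y : Elems s} (h : x.val = y.val) : x = y := Subtype.ext h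

theorem Elems.val_mem {s : Finset ℕ} (x : Elems s) : x.val ∈ s := x.2

/-- Finite lattices on finite sets of natural numbers: a chain of them has a countable union,
and the extension problems over them form a countable family. -/
structure FinLat where
  carrier : Finset ℕ
  lattice : Lattice (Elems carrier)

attribute [instance] FinLat.lattice

namespace FinLat

abbrev Elem (P : FinLat) : Type := Elems P.carrier

instance (P : FinLat) : Fintype P.Elem := inferInstanceAs (Fintype P.carrier)

def Embeds (P : FinLat) {A : Type} [Lattice A] (e : A → ℕ) : Prop :=
  ∃ e' : A → P.Elem, IsLatEmb e' ∧ Elems.val ∘ e' = e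

/-- `P ≤ Q` when `P` is a sublattice of `Q`. -/
instance : Preorder FinLat where
  le P Q := Q.Embeds (Elems.val : P.Elem → ℕ)
  le_refl _ := ⟨id, isLatEmb_id, rfl⟩
  le_trans _ _ _ := fun ⟨ι, hι, hιv⟩ ⟨κ, hκ, hκv⟩ =>
    ⟨κ ∘ ι, hκ.comp hι, by rw [← comp_assoc, hκv, hιv]⟩

theorem le_iff_embeds {P Q : FinLat} : P ≤ Q ↔ Q.Embeds (Elems.val : P.Elem → ℕ) := Iff.rfl

instance : Inhabited FinLat :=
  have : IsEmpty (Elems ∅) := ⟨fun x => Finset.notMem_empty _ x.2⟩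
  ⟨⟨∅, (Equiv.equivOfIsEmpty _ (Fin 0)).lattice⟩⟩

variable {P Q R : FinLat} {A : Type} [Lattice A]

theorem Embeds.mono {e : A → ℕ} (he : P.Embeds e) (h : P ≤ Q) : Q.Embeds e := by
  obtain ⟨e', he', rfl⟩ := he
  obtain ⟨ι, hι, hιv⟩ := le_iff_embeds.1 h
  exact ⟨ι ∘ e', hι.comp he', by rw [← comp_assoc, hιv]⟩

theorem Embeds.comp {B : Type} [Lattice B] {e : A → ℕ} (he : P.Embeds e) {g : B → A}
    (hg : IsLatEmb g) : P.Embeds (e ∘ g) := by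
  obtain ⟨e', he', rfl⟩ := he
  exact ⟨e' ∘ g, he'.comp hg, rfl⟩

theorem mem_of_le (h : P ≤ Q) {x : ℕ} (hx : x ∈ P.carrier) : x ∈ Q.carrier := by
  obtain ⟨ι, -, hιv⟩ := le_iff_embeds.1 h
  have hιx : (ι ⟨x, hx⟩).val = x := congrFun hιv ⟨x, hx⟩
  exact hιx ▸ (ι ⟨x, hx⟩).val_mem

theorem val_sup_inf_eq (hP : P ≤ R) (hQ : Q ≤ R) {a b : P.Elem} {a' b' : Q.Elem}
    (ha : a.val = a'.val) (hb : b.val = b'.val) :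
    (a ⊔ b).val = (a' ⊔ b').val ∧ (a ⊓ b).val = (a' ⊓ b').val := by
  obtain ⟨ι, hι, hιv⟩ := le_iff_embeds.1 hP
  obtain ⟨κ, hκ, hκv⟩ := le_iff_embeds.1 hQ
  have hv (x : P.Elem) : (ι x).val = x.val := congrFun hιv x
  have hw (x : Q.Elem) : (κ x).val = x.val := congrFun hκv x
  have ha' : ι a = κ a' := Elems.ext (by rw [hv, hw, ha])
  have hb' : ι b = κ b' := Elems.ext (by rw [hv, hw, hb])
  rw [← hv, ← hw, ← hv (a ⊓ b), ← hw (a' ⊓ b'), (hι.2 a b).1, (hκ.2 a' b').1, (hι.2 a b).2,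
    (hκ.2 a' b').2, ha', hb']
  exact ⟨rfl, rfl⟩

theorem exists_embeds_of_injective {D : Type} [Lattice D] [Finite D] {f : D → ℕ}
    (hf : Injective f) : ∃ Q : FinLat, Q.Embeds f := by
  let φ : D ≃ Elems (Set.finite_range f).toFinset :=
    (Equiv.ofInjective f hf).trans
      (Equiv.subtypeEquivRight fun _ => (Set.Finite.mem_toFinset _).symm)
  exact ⟨⟨_, φ.symm.lattice⟩, φ, φ.symm.isLatEmb_symm_lattice, rfl⟩

theorem exists_le_embeds_comp_eq_val {D : Type} [Lattice D] [Finite D] {v : P.Elem → D}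
    (hv : IsLatEmb v) : ∃ Q, P ≤ Q ∧ ∃ f : D → ℕ, Q.Embeds f ∧ f ∘ v = Elems.val := by
  obtain ⟨f, hf, hfv⟩ := exists_injective_comp_eq_val (S := P.carrier) hv.1
  replace hfv : f ∘ v = Elems.val := hfv
  obtain ⟨Q, hQ⟩ := exists_embeds_of_injective hf
  exact ⟨Q, le_iff_embeds.2 (hfv ▸ hQ.comp hv), f, hQ, hfv⟩

theorem Embeds.exists_extend {B : Type} [Lattice B] [Finite B] {e : A → ℕ} (he : P.Embeds e)
    {j : A → B} (hj : IsLatEmb j) : ∃ Q, P ≤ Q ∧ ∃ f : B → ℕ, Q.Embeds f ∧ f ∘ j = e := by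
  obtain ⟨e', he', rfl⟩ := he
  obtain ⟨D, _, _, u, v, hu, hv, huv⟩ := exists_finite_amalgam hj he'
  obtain ⟨Q, hPQ, f, hf, hfv⟩ := exists_le_embeds_comp_eq_val hv
  exact ⟨Q, hPQ, f ∘ u, hf.comp hu, by rw [comp_assoc, huv, ← comp_assoc, hfv]⟩

end FinLat

/-- The lattice axioms involve at most three elements, so it is enough that any three elements
lie in the image of a lattice under a map preserving `⊔` and `⊓`. -/
abbrev Lattice.ofLocal {M : Type} [Max M] [Min M]
    (h : ∀ x y z : M, ∃ (P : Type) (_ : Lattice P) (f : P → M),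
      (∀ a b, f (a ⊔ b) = f a ⊔ f b ∧ f (a ⊓ b) = f a ⊓ f b) ∧
      ∃ a b c, f a = x ∧ f b = y ∧ f c = z) : Lattice M := by
  refine Lattice.mk' ?_ ?_ ?_ ?_ ?_ ?_ <;> intro x y <;> try intro z
  all_goals
    first
    | obtain ⟨P, _, f, hf, a, b, c, rfl, rfl, rfl⟩ := h x y z
    | obtain ⟨P, _, f, hf, a, b, c, rfl, rfl, -⟩ := h x y x
    simp only [← (hf _ _).1, ← (hf _ _).2]
  · rw [sup_comm]
  · rw [sup_assoc]
  · rw [inf_comm]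
  · rw [inf_assoc]
  · rw [sup_inf_self]
  · rw [inf_sup_self]

namespace FinLat

def iUnion (F : ℕ →o FinLat) : Type := {x : ℕ // ∃ n, x ∈ (F n).carrier}

namespace iUnion

variable {F : ℕ →o FinLat}

instance : Countable (iUnion F) := Subtype.countable

def incl (n : ℕ) (a : (F n).Elem) : iUnion F := ⟨a.val, n, a.val_mem⟩

theorem incl_injective (n : ℕ) : Injective (incl n : (F n).Elem → iUnion F) :=
  fun _ _ h => Elems.ext (congrArg (fun x : iUnion F => x.1) h)

noncomputable def stage (x : iUnion F) : ℕ := Nat.find x.2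

def toStage (x : iUnion F) {n : ℕ} (h : x.stage ≤ n) : (F n).Elem :=
  ⟨x.1, mem_of_le (F.monotone h) (Nat.find_spec x.2)⟩

noncomputable instance : Max (iUnion F) :=
  ⟨fun x y => incl _ (toStage x (le_max_left x.stage y.stage) ⊔ toStage y (le_max_right _ _))⟩

noncomputable instance : Min (iUnion F) :=
  ⟨fun x y => incl _ (toStage x (le_max_left x.stage y.stage) ⊓ toStage y (le_max_right _ _))⟩

theorem incl_sup_inf {n : ℕ} (a b : (F n).Elem) :
    incl n (a ⊔ b) = incl n a ⊔ incl n b ∧ incl n (a ⊓ b) = incl n a ⊓ incl n b :=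
  have h := val_sup_inf_eq (F.monotone (le_max_left n ((incl n a).stage ⊔ (incl n b).stage)))
    (F.monotone (le_max_right _ _)) (a := a) (b := b)
    (a' := toStage (incl n a) (le_max_left _ (incl n b).stage))
    (b' := toStage (incl n b) (le_max_right (incl n a).stage _)) rfl rfl
  ⟨Subtype.ext h.1, Subtype.ext h.2⟩

theorem exists_stage (S : Finset (iUnion F)) : ∃ n, ∀ x ∈ S, x.stage ≤ n :=
  ⟨S.sup stage, fun _ => Finset.le_sup⟩

noncomputable instance : Lattice (iUnion F) := Lattice.ofLocal fun x y z => by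
  classical
  obtain ⟨n, hn⟩ := exists_stage {x, y, z}
  exact ⟨(F n).Elem, inferInstance, incl n, incl_sup_inf, toStage x (hn x (by simp)),
    toStage y (hn y (by simp)), toStage z (hn z (by simp)), rfl, rfl, rfl⟩

theorem isLatEmb_incl (n : ℕ) : IsLatEmb (incl n : (F n).Elem → iUnion F) :=
  ⟨incl_injective n, incl_sup_inf⟩

theorem latLocallyFinite : LatLocallyFinite (iUnion F) := by
  classical
  intro S
  obtain ⟨n, hn⟩ := exists_stage S
  refine ⟨Finset.univ.image (incl n), fun x hx => Finset.mem_image.2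
    ⟨toStage x (hn x hx), Finset.mem_univ _, rfl⟩, ?_⟩
  simp only [Finset.mem_image, Finset.mem_univ, true_and]
  rintro _ ⟨a, rfl⟩ _ ⟨b, rfl⟩
  exact ⟨⟨a ⊔ b, (incl_sup_inf a b).1⟩, ⟨a ⊓ b, (incl_sup_inf a b).2⟩⟩

theorem exists_stage_embeds {A : Type} [Lattice A] [Fintype A] {e : A → iUnion F}
    (he : IsLatEmb e) : ∃ n, (F n).Embeds (fun a => (e a).1) := by
  classical
  obtain ⟨n, hn⟩ := exists_stage (Finset.univ.image e)
  have hn' (a : A) : (e a).stage ≤ n := hn _ (Finset.mem_image_of_mem _ (Finset.mem_univ a))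
  exact ⟨n, fun a => toStage (e a) (hn' a), (isLatEmb_incl n).of_comp he, rfl⟩

theorem _root_.FinLat.Embeds.exists_isLatEmb {A : Type} [Lattice A] {n : ℕ} {f : A → ℕ}
    (hf : (F n).Embeds f) : ∃ g : A → iUnion F, IsLatEmb g ∧ ∀ a, (g a).1 = f a := by
  obtain ⟨f', hf', rfl⟩ := hf
  exact ⟨incl n ∘ f', (isLatEmb_incl n).comp hf', fun _ => rfl⟩

end iUnion

end FinLat

theorem exists_seq_frequently_eq (α : Type) [Countable α] [Nonempty α] :
    ∃ s : ℕ → α, ∀ a, ∃ᶠ n in Filter.atTop, s n = a := by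
  obtain ⟨g, hg⟩ := exists_surjective_nat α
  refine ⟨fun n => g n.unpair.2, fun a => Filter.frequently_atTop.2 fun n => ?_⟩
  obtain ⟨k, rfl⟩ := hg a
  exact ⟨Nat.pair n k, Nat.left_le_pair n k, by simp⟩

instance {α : Type} [Finite α] : Finite (Lattice α) :=
  Finite.of_injective (fun l : Lattice α => (l.le : α → α → Prop)) fun _ _ h =>
    Lattice.ext fun x y => Iff.of_eq (congrFun₂ h x y)

/-- The problem of extending `e` along `j`, where `latA` and `latB` are arbitrary lattice
structures, not the linear orders of `Fin a` and `Fin b`. -/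
structure ExtensionProblem where
  a : ℕ
  b : ℕ
  latA : Lattice (Fin a)
  latB : Lattice (Fin b)
  j : Fin a → Fin b
  e : Fin a → ℕ

namespace ExtensionProblem

instance : Countable ExtensionProblem := by
  refine Injective.countable (f := fun t => (⟨(t.a, t.b), t.latA, t.latB, t.j, t.e⟩ :
    Σ ab : ℕ × ℕ, Lattice (Fin ab.1) × Lattice (Fin ab.2) × (Fin ab.1 → Fin ab.2) × (Fin ab.1 → ℕ)))
    ?_
  rintro ⟨⟩ ⟨⟩ h
  simp only [Sigma.mk.injEq, Prod.mk.injEq] at h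
  obtain ⟨⟨rfl, rfl⟩, h⟩ := h
  simp_all

instance : Nonempty ExtensionProblem := ⟨⟨0, 0, inferInstance, inferInstance, id, Fin.elim0⟩⟩

variable (t : ExtensionProblem)

def Valid (P : FinLat) : Prop := @IsLatEmb _ _ t.latA t.latB t.j ∧ @FinLat.Embeds P _ t.latA t.e

def Solved (Q : FinLat) : Prop := ∃ f : Fin t.b → ℕ, @FinLat.Embeds Q _ t.latB f ∧ f ∘ t.j = t.e

variable {t} {P Q : FinLat}

theorem Valid.mono (h : t.Valid P) (hPQ : P ≤ Q) : t.Valid Q :=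
  let _ := t.latA
  ⟨h.1, h.2.mono hPQ⟩

theorem Valid.exists_le_solved (h : t.Valid P) : ∃ Q, P ≤ Q ∧ t.Solved Q :=
  let _ := t.latA
  let _ := t.latB
  h.2.exists_extend h.1

end ExtensionProblem

namespace FinLat

theorem ultraFin_iUnion {F : ℕ →o FinLat}
    (hF : ∀ (t : ExtensionProblem) (n : ℕ), t.Valid (F n) → ∃ m, t.Solved (F m)) :
    UltraFin (iUnion F) := by
  intro A B _ _ _ _ j e hj he
  obtain ⟨n, hn⟩ := iUnion.exists_stage_embeds he
  let eA := (Fintype.equivFin A).symm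
  let eB := (Fintype.equivFin B).symm
  let _ := eA.lattice
  let _ := eB.lattice
  let t : ExtensionProblem :=
    ⟨_, _, eA.lattice, eB.lattice, eB.symm ∘ j ∘ eA, (fun a => (e a).1) ∘ eA⟩
  obtain ⟨m, f, hf, hfj⟩ := hF t n
    ⟨(eB.isLatEmb_symm_lattice.comp hj).comp eA.isLatEmb_lattice, hn.comp eA.isLatEmb_lattice⟩
  obtain ⟨g, hg, hgf⟩ := hf.exists_isLatEmb
  refine ⟨g ∘ eB.symm, hg.comp eB.isLatEmb_symm_lattice, funext fun a => Subtype.ext ?_⟩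
  simpa [t, hgf] using congrFun hfj (eA.symm a)

open scoped Classical in
noncomputable def step (t : ExtensionProblem) (P : FinLat) : FinLat :=
  if h : t.Valid P then h.exists_le_solved.choose else P

theorem le_step (t : ExtensionProblem) (P : FinLat) : P ≤ step t P := by
  unfold step
  split_ifs with h
  exacts [h.exists_le_solved.choose_spec.1, le_rfl]

theorem solved_step {t : ExtensionProblem} {P : FinLat} (h : t.Valid P) : t.Solved (step t P) := by
  rw [step, dif_pos h]
  exact h.exists_le_solved.choose_spec.2

noncomputable def schedule : ℕ → ExtensionProblem :=
  (exists_seq_frequently_eq ExtensionProblem).choose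

noncomputable def chainSeq : ℕ → FinLat
  | 0 => default
  | n + 1 => step (schedule n) (chainSeq n)

noncomputable def chain : ℕ →o FinLat :=
  ⟨chainSeq, monotone_nat_of_le_succ fun _ => le_step _ _⟩

theorem exists_solved_chain (t : ExtensionProblem) (n : ℕ) (h : t.Valid (chain n)) :
    ∃ m, t.Solved (chain m) := by
  obtain ⟨m, hm, hnm⟩ := ((exists_seq_frequently_eq ExtensionProblem).choose_spec t
    |>.and_eventually (Filter.eventually_ge_atTop n)).exists
  subst hm
  exact ⟨m + 1, solved_step (h.mono (chain.monotone hnm))⟩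

end FinLat

/-- There exists a countable lattice that is locally finite, universal for finite
lattices, and ultrahomogeneous for finite lattices (the Fraïssé limit of the class
of finite lattices). -/
theorem exists_fraisse_lattice :
    ∃ (L : Type) (inst : Lattice L), Countable L ∧
      @LatLocallyFinite L inst ∧ @UnivFin L inst ∧ @UltraFin L inst :=
  have hultra := FinLat.ultraFin_iUnion FinLat.exists_solved_chain
  ⟨_, inferInstance, inferInstance, FinLat.iUnion.latLocallyFinite, hultra.univFin, hultra⟩
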